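/- Given a 0-SLT grammar G (an SLT grammar in which all nonterminals have rank 0, i.e., a DAG) and a subset R of the nodes of val(G), there exists a straight-line program (SLP) of size O(|G|+|R|) that generates the concatenation, in pre-order of the nodes of R, of the serializations of the subtrees of val(G) rooted at the nodes in R. -/

import Mathlib

/-- Trees over terminal labels `L`, nonterminals `N`, the leaf symbol `_`
(constructor `leaf`) and parameters `y_i` (constructor `param i`, 1-indexed).
Terminal-labeled nodes have exactly two children; a nonterminal node has a
list of children (its length being constrained by `ArityOk`). -/
inductive PTree (L N : Type) where
  | leaf : PTree L N
  | param : ℕ → PTree L N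
  | term : L → PTree L N → PTree L N → PTree L N
  | nt : N → List (PTree L N) → PTree L N

namespace PTree

variable {L N : Type}

/-- The pre-order list of parameter indices occurring in a tree. -/
def paramList : PTree L N → List ℕ
  | .leaf => []
  | .param i => [i]
  | .term _ l r => paramList l ++ paramList r
  | .nt _ ts => (ts.attach.map (fun t => paramList t.1)).flatten
decreasing_by
  all_goals simp_wf
  all_goals try omega
  all_goals (have := List.sizeOf_lt_of_mem t.2; omega)

/-- The number of nodes of a tree. -/
def nodeCount : PTree L N → ℕ
  | .leaf => 1
  | .param _ => 1
  | .term _ l r => 1 + nodeCount l + nodeCount r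
  | .nt _ ts => 1 + (ts.attach.map (fun t => nodeCount t.1)).sum
decreasing_by
  all_goals simp_wf
  all_goals try omega
  all_goals (have := List.sizeOf_lt_of_mem t.2; omega)

/-- Arities are respected: every nonterminal node labeled `A` has exactly
`rank A` children. -/
inductive ArityOk (rank : N → ℕ) : PTree L N → Prop
  | leaf : ArityOk rank .leaf
  | param (i : ℕ) : ArityOk rank (.param i)
  | term (a : L) {l r : PTree L N} :
      ArityOk rank l → ArityOk rank r → ArityOk rank (.term a l r)
  | nt (A : N) {ts : List (PTree L N)} :
      ts.length = rank A → (∀ t ∈ ts, ArityOk rank t) → ArityOk rank (.nt A ts)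

/-- `Occurs B t` holds iff the nonterminal `B` occurs somewhere in `t`. -/
inductive Occurs (B : N) : PTree L N → Prop
  | here (ts : List (PTree L N)) : Occurs B (.nt B ts)
  | nt (A : N) {ts : List (PTree L N)} {t : PTree L N} :
      t ∈ ts → Occurs B t → Occurs B (.nt A ts)
  | term_left (a : L) {l r : PTree L N} : Occurs B l → Occurs B (.term a l r)
  | term_right (a : L) {l r : PTree L N} : Occurs B r → Occurs B (.term a l r)

/-- Ground trees: binary trees built from terminal symbols and `_`-leaves only
(no nonterminals, no parameters). -/
inductive Ground : PTree L N → Prop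
  | leaf : Ground .leaf
  | term (a : L) {l r : PTree L N} : Ground l → Ground r → Ground (.term a l r)

/-- Substitution of the parameters `y_1, …, y_k` by the trees of `env`
(`y_i` is replaced by the `i`-th entry of `env`). -/
def subst (env : List (PTree L N)) : PTree L N → PTree L N
  | .leaf => .leaf
  | .param i => env.getD (i - 1) .leaf
  | .term a l r => .term a (subst env l) (subst env r)
  | .nt B ts => .nt B (ts.attach.map (fun t => subst env t.1))
decreasing_by
  all_goals simp_wf
  all_goals try omega
  all_goals (have := List.sizeOf_lt_of_mem t.2; omega)

end PTree

open PTree in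
/-- A straight-line (linear) tree grammar `G = (N, S, P)`:
each nonterminal `A` of rank `k` has exactly one production `A → P A`, in whose
right-hand side the parameters `y_1, …, y_k` occur exactly once each and
in this order in pre-order, all arities are respected, and the hierarchical
order `H_G = {(A, B) | B occurs in P A}` is acyclic. -/
structure SLT (L N : Type) where
  rank : N → ℕ
  start : N
  P : N → PTree L N
  rank_start : rank start = 0
  arity : ∀ A, ArityOk rank (P A)
  params : ∀ A, paramList (P A) = List.range' 1 (rank A)
  acyclic : ∀ A, ¬ Relation.TransGen (fun X Y => Occurs Y (P X)) A A

namespace SLT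

variable {L N : Type}

/-- One derivation step: replace one occurrence of a subtree `A(t_1, …, t_k)`
(`A` a nonterminal) by `P A` with each parameter `y_i` replaced by `t_i`. -/
inductive Rw (G : SLT L N) : PTree L N → PTree L N → Prop
  | head (A : N) (ts : List (PTree L N)) :
      Rw G (.nt A ts) (PTree.subst ts (G.P A))
  | term_left {l l' : PTree L N} (a : L) (r : PTree L N) :
      Rw G l l' → Rw G (.term a l r) (.term a l' r)
  | term_right {r r' : PTree L N} (a : L) (l : PTree L N) :
      Rw G r r' → Rw G (.term a l r) (.term a l r')
  | nt_child {t t' : PTree L N} (B : N) (u v : List (PTree L N)) :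
      Rw G t t' → Rw G (.nt B (u ++ t :: v)) (.nt B (u ++ t' :: v))

/-- The size of a grammar: the sum of the numbers of edges of all
right-hand sides. -/
def size [Fintype N] (G : SLT L N) : ℕ :=
  ∑ A : N, (PTree.nodeCount (G.P A) - 1)

end SLT

/-- A straight-line program (SLP): a context-free string grammar over terminal
alphabet `Γ` with nonterminal set `V` in which every nonterminal `v` has
exactly one production `v → P v` and the derivation relation among
nonterminals is acyclic. -/
structure SLP (Γ V : Type) where
  start : V
  P : V → List (Γ ⊕ V)
  acyclic : ∀ v, ¬ Relation.TransGen (fun x y => Sum.inr y ∈ P x) v v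

namespace SLP

variable {Γ V : Type}

/-- One derivation step of an SLP: replace one occurrence of a nonterminal by
its right-hand side. -/
inductive Rw (H : SLP Γ V) : List (Γ ⊕ V) → List (Γ ⊕ V) → Prop
  | step (u : List (Γ ⊕ V)) (v : V) (w : List (Γ ⊕ V)) :
      Rw H (u ++ Sum.inr v :: w) (u ++ H.P v ++ w)

/-- The SLP generates the string `s` (the unique string derivable from its
start nonterminal). -/
def Generates (H : SLP Γ V) (s : List Γ) : Prop :=
  Relation.ReflTransGen (Rw H) [Sum.inr H.start] (s.map Sum.inl)

/-- The size of an SLP: the total length of all right-hand sides. -/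
def size [Fintype V] (H : SLP Γ V) : ℕ :=
  ∑ v : V, (H.P v).length

end SLP

/-- The serialization of a (ground) tree: the string of opening brackets
`<a>` (encoded `(a, false)`) and closing brackets `</a>` (encoded
`(a, true)`) produced by the depth-first left-to-right traversal, the
`_`-leaves contributing nothing. -/
def PTree.serialize {L N : Type} : PTree L N → List (L × Bool)
  | .leaf => []
  | .param _ => []
  | .term a l r => (a, false) :: (serialize l ++ serialize r ++ [(a, true)])
  | .nt _ _ => []

namespace PTree

variable {L N : Type}

/-- The subtree of a (ground) tree rooted at a position
(`false` = left child, `true` = right child). -/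
def subtreeAt : PTree L N → List Bool → PTree L N
  | t, [] => t
  | .term _ l r, b :: p => subtreeAt (if b then r else l) p
  | t, _ :: _ => t

/-- Whether a position is a node of a (ground) tree. -/
def ValidPos : PTree L N → List Bool → Prop
  | _, [] => True
  | .term _ l r, b :: p => ValidPos (if b then r else l) p
  | _, _ :: _ => False

end PTree

/-- Strict pre-order (document order) on positions of a binary tree: `u`
comes before `v` iff `u` is a proper prefix (ancestor) of `v`, or `u` lies in
the left subtree and `v` in the right subtree of their common ancestor. -/
def preLt (u v : List Bool) : Prop :=
  (u <+: v ∧ u ≠ v) ∨ ∃ w x y, u = w ++ false :: x ∧ v = w ++ true :: y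

/-!
Every node of a right-hand side that is not below a nonterminal node becomes an SLP nonterminal:
a terminal node `a(l, r)` gets the production `<a> X_l X_r </a>` and a `_`-leaf the empty one,
while a nonterminal leaf `B` is represented by the root of the first right-hand side below `B`
that is not a single nonterminal. By induction along the (acyclic) hierarchical order, each of
these derives the serialization of the tree its node expands to, and a node expanding to the
subtree at a position `p` of `val(G)` exists for every `p`; the start production lists these
nodes for `p ∈ R`. The SLP is acyclic because a production refers either to children of its
node or to a right-hand side strictly below it in the hierarchical order. Only terminal nodes
get nonempty productions, of length `4`, and each has two outgoing edges, so the SLP has size at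
most `|R| + 2|G|`.
-/

namespace PTree

variable {L N : Type}

@[elab_as_elim]
theorem induction {motive : PTree L N → Prop} (leaf : motive .leaf)
    (param : ∀ i, motive (.param i))
    (term : ∀ a l r, motive l → motive r → motive (.term a l r))
    (nt : ∀ B ts, (∀ t ∈ ts, motive t) → motive (.nt B ts)) : ∀ t, motive t
  | .leaf => leaf
  | .param i => param i
  | .term a l r => term a l r (induction leaf param term nt l)
      (induction leaf param term nt r)
  | .nt B ts => nt B ts fun t _ => induction leaf param term nt t
decreasing_by
  all_goals simp_wf
  all_goals try omega
  have := List.sizeOf_lt_of_mem ‹_ ∈ ts›; omega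

@[simp] lemma paramList_term (a : L) (l r : PTree L N) :
    (term a l r).paramList = l.paramList ++ r.paramList := by
  rw [paramList]

@[simp] lemma paramList_nt (B : N) (ts : List (PTree L N)) :
    (nt B ts).paramList = (ts.map paramList).flatten := by
  rw [paramList, List.attach_map_val]

@[simp] lemma subst_term (env : List (PTree L N)) (a : L) (l r : PTree L N) :
    (term a l r).subst env = term a (l.subst env) (r.subst env) := by
  rw [subst]

@[simp] lemma subst_nt (env : List (PTree L N)) (B : N) (ts : List (PTree L N)) :
    (nt B ts).subst env = nt B (ts.map (subst env)) := by
  rw [subst, List.attach_map_val]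

@[simp] lemma nodeCount_term (a : L) (l r : PTree L N) :
    (term a l r).nodeCount = 1 + l.nodeCount + r.nodeCount := by
  rw [nodeCount]

lemma one_le_nodeCount (t : PTree L N) : 1 ≤ t.nodeCount := by
  cases t <;> rw [nodeCount] <;> omega

lemma subst_eq_self_of_paramList_eq_nil (env : List (PTree L N)) {t : PTree L N}
    (ht : t.paramList = []) : t.subst env = t := by
  induction t using PTree.induction with
  | leaf => rw [subst]
  | param i => simp [paramList] at ht
  | term a l r ihl ihr =>
    simp only [paramList_term, List.append_eq_nil_iff] at ht
    rw [subst_term, ihl ht.1, ihr ht.2]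
  | nt B ts ih =>
    simp only [paramList_nt, List.flatten_eq_nil_iff, List.mem_map] at ht
    rw [subst_nt, List.map_congr_left (g := id) fun u hu => ih u hu (ht _ ⟨u, hu, rfl⟩),
      List.map_id]

def expand (g : N → PTree L N) : PTree L N → PTree L N
  | .leaf => .leaf
  | .param i => .param i
  | .term a l r => .term a (expand g l) (expand g r)
  | .nt B _ => g B

lemma expand_congr {g g' : N → PTree L N} {t : PTree L N}
    (h : ∀ B, Occurs B t → g B = g' B) : t.expand g = t.expand g' := by
  induction t using PTree.induction with
  | leaf | param => rfl
  | term a l r ihl ihr =>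
    rw [expand, expand, ihl fun B hB => h B (.term_left a hB),
      ihr fun B hB => h B (.term_right a hB)]
  | nt B ts => exact h B (.here ts)

lemma Ground.expand_eq {t : PTree L N} (ht : Ground t) (g : N → PTree L N) :
    t.expand g = t := by
  induction ht with
  | leaf => rfl
  | term a _ _ ihl ihr => rw [expand, ihl, ihr]

/-- The subtrees of `t` rooted at nodes that are not below a nonterminal node, in pre-order. -/
def subtrees : PTree L N → List (PTree L N)
  | .term a l r => .term a l r :: (l.subtrees ++ r.subtrees)
  | t => [t]

lemma mem_subtrees_self (t : PTree L N) : t ∈ t.subtrees := by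
  cases t <;> simp [subtrees]

lemma subtrees_subset {t u : PTree L N} (h : u ∈ t.subtrees) : u.subtrees ⊆ t.subtrees := by
  induction t using PTree.induction with
  | term a l r ihl ihr =>
    simp only [subtrees, List.mem_cons, List.mem_append] at h
    rcases h with rfl | h | h
    · exact List.Subset.refl _
    · exact List.Subset.trans (ihl h) fun x hx => by simp [subtrees, hx]
    · exact List.Subset.trans (ihr h) fun x hx => by simp [subtrees, hx]
  | _ => simp only [subtrees, List.mem_singleton] at h; rw [h]; exact List.Subset.refl _

lemma left_mem_subtrees {t l r : PTree L N} {a : L} (h : term a l r ∈ t.subtrees) :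
    l ∈ t.subtrees :=
  subtrees_subset h (by simp [subtrees, mem_subtrees_self])

lemma right_mem_subtrees {t l r : PTree L N} {a : L} (h : term a l r ∈ t.subtrees) :
    r ∈ t.subtrees :=
  subtrees_subset h (by simp [subtrees, mem_subtrees_self])

lemma occurs_of_nt_mem_subtrees {t : PTree L N} {B : N} {ts : List (PTree L N)}
    (h : nt B ts ∈ t.subtrees) : Occurs B t := by
  induction t using PTree.induction with
  | term a l r ihl ihr =>
    simp only [subtrees, List.mem_cons, reduceCtorEq, List.mem_append, false_or] at h
    exact h.elim (fun h => .term_left a (ihl h)) fun h => .term_right a (ihr h)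
  | _ => simp only [subtrees, List.mem_singleton] at h; rw [← h]; exact .here ts

/-- A terminal node has two outgoing edges, so a charge of `4` per terminal node is at most
two per edge. -/
lemma sum_map_subtrees_le (f : PTree L N → ℕ) (hterm : ∀ a l r, f (term a l r) ≤ 4)
    (hother : ∀ t, (∀ a l r, t ≠ term a l r) → f t = 0) (t : PTree L N) :
    (t.subtrees.map f).sum ≤ 2 * (t.nodeCount - 1) := by
  induction t using PTree.induction with
  | term a l r ihl ihr =>
    have := hterm a l r
    have := one_le_nodeCount l
    have := one_le_nodeCount r
    simp only [subtrees, List.map_cons, List.map_append, List.sum_cons, List.sum_append,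
      nodeCount_term]
    omega
  | _ => simp [subtrees, hother]

end PTree

theorem Relation.not_transGen_self_of_map_lt {α β : Type*} [Preorder β] {r : α → α → Prop}
    (f : α → β) (hf : ∀ a b, r a b → f b < f a) (a : α) : ¬ Relation.TransGen r a a := by
  suffices ∀ b, Relation.TransGen r a b → f b < f a from fun h => lt_irrefl _ (this a h)
  intro b h
  induction h with
  | single h => exact hf _ _ h
  | tail _ h ih => exact (hf _ _ h).trans ih

namespace SLP

variable {Γ V : Type}

def Derives (H : SLP Γ V) (xs : List (Γ ⊕ V)) (s : List Γ) : Prop :=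
  Relation.ReflTransGen H.Rw xs (s.map Sum.inl)

variable {H : SLP Γ V}

lemma Rw.append_left {xs ys : List (Γ ⊕ V)} (h : H.Rw xs ys) (zs : List (Γ ⊕ V)) :
    H.Rw (zs ++ xs) (zs ++ ys) := by
  obtain ⟨u, v, w⟩ := h
  simpa using Rw.step (zs ++ u) v w

lemma Rw.append_right {xs ys : List (Γ ⊕ V)} (h : H.Rw xs ys) (zs : List (Γ ⊕ V)) :
    H.Rw (xs ++ zs) (ys ++ zs) := by
  obtain ⟨u, v, w⟩ := h
  simpa using Rw.step u v (w ++ zs)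

lemma derives_map_inl (s : List Γ) : H.Derives (s.map Sum.inl) s :=
  Relation.ReflTransGen.refl

lemma Derives.append {xs ys : List (Γ ⊕ V)} {s t : List Γ} (hs : H.Derives xs s)
    (ht : H.Derives ys t) : H.Derives (xs ++ ys) (s ++ t) := by
  unfold Derives at *
  rw [List.map_append]
  exact (hs.lift (· ++ ys) fun _ _ h => h.append_right ys).trans
    (ht.lift (s.map Sum.inl ++ ·) fun _ _ h => h.append_left _)

lemma Derives.nonterminal {v : V} {s : List Γ} (h : H.Derives (H.P v) s) :
    H.Derives [Sum.inr v] s :=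
  .head (by simpa using Rw.step [] v []) h

lemma Derives.map_flatten {ι : Type*} {l : List ι} {f : ι → Γ ⊕ V} {g : ι → List Γ}
    (h : ∀ i ∈ l, H.Derives [f i] (g i)) : H.Derives (l.map f) (l.map g).flatten := by
  induction l with
  | nil => exact derives_map_inl []
  | cons i l ih =>
    simpa using (h i (by simp)).append (ih fun j hj => h j (by simp [hj]))

def relabel {V' : Type} (e : V ≃ V') (H : SLP Γ V) : SLP Γ V' where
  start := e H.start
  P v := (H.P (e.symm v)).map (Sum.map id e)
  acyclic v hv := H.acyclic (e.symm v) <| hv.lift e.symm fun x y hxy => by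
    obtain ⟨z, hz, hzy⟩ := List.mem_map.1 hxy
    cases z with
    | inl => cases hzy
    | inr z => cases hzy; simpa [Function.onFun] using hz

lemma size_relabel {V' : Type} [Fintype V] [Fintype V'] (e : V ≃ V') (H : SLP Γ V) :
    (H.relabel e).size = H.size := by
  simp only [size, relabel, List.length_map]
  exact Fintype.sum_equiv e.symm _ _ fun _ => rfl

lemma Generates.relabel {V' : Type} (e : V ≃ V') {s : List Γ} (h : H.Generates s) :
    (H.relabel e).Generates s := by
  have := h.lift (p := (H.relabel e).Rw) (List.map (Sum.map id e)) fun _ _ hxy => by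
    obtain ⟨u, v, w⟩ := hxy
    simpa [SLP.relabel, Function.onFun] using
      Rw.step (H := H.relabel e) (u.map (Sum.map id e)) (e v) (w.map (Sum.map id e))
  simpa [Generates, SLP.relabel, List.map_map, Function.comp_def, Function.onFun] using this

end SLP

namespace SLT

open PTree

variable {L N : Type} (G : SLT L N)

def Below (B A : N) : Prop :=
  Relation.TransGen (fun X Y => Occurs Y (G.P X)) A B

variable {G}

lemma below_of_occurs {A B : N} (h : Occurs B (G.P A)) : G.Below B A :=
  .single h

variable (G)

lemma wellFounded_below [Finite N] : WellFounded G.Below := by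
  have : IsTrans N G.Below := ⟨fun _ _ _ hab hbc => hbc.trans hab⟩
  have : Std.Irrefl G.Below := ⟨G.acyclic⟩
  exact Finite.wellFounded_of_trans_of_irrefl _

instance [Finite N] : IsWellFounded N G.Below := ⟨G.wellFounded_below⟩

open Classical in
/-- The tree derived from `A` when all ranks are `0` (the `.leaf` branch is never taken). -/
noncomputable def expansion [Finite N] : N → PTree L N :=
  G.wellFounded_below.fix fun A ih =>
    (G.P A).expand fun B => if h : Occurs B (G.P A) then ih B (below_of_occurs h) else .leaf

lemma expansion_eq [Finite N] (A : N) : G.expansion A = (G.P A).expand G.expansion := by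
  classical
  rw [expansion, WellFounded.fix_eq]
  exact expand_congr fun B hB => by rw [dif_pos hB]

/-- Nodes of right-hand sides not below a nonterminal node: `⟨A, i⟩` is the `i`-th entry of
`(G.P A).subtrees`. -/
abbrev Node : Type := Σ A : N, Fin (G.P A).subtrees.length

variable {G} in
def Node.tree (v : G.Node) : PTree L N := (G.P v.1).subtrees[v.2]

open Classical in
noncomputable def node (A : N) (x : PTree L N) : G.Node :=
  ⟨A, if h : x ∈ (G.P A).subtrees then ⟨_, List.idxOf_lt_length_of_mem h⟩
    else ⟨0, List.length_pos_of_mem (mem_subtrees_self _)⟩⟩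

lemma tree_node {A : N} {x : PTree L N} (hx : x ∈ (G.P A).subtrees) : (G.node A x).tree = x := by
  classical
  simp only [node, Node.tree, dif_pos hx]
  exact List.getElem_idxOf _

section

variable [Finite N] {G}

lemma expand_eq_of_rw (h0 : ∀ A, G.rank A = 0) {u v : PTree L N} (h : G.Rw u v) :
    u.expand G.expansion = v.expand G.expansion := by
  induction h with
  | head A ts =>
    have hparams : (G.P A).paramList = [] := by rw [G.params A, h0 A]; rfl
    rw [subst_eq_self_of_paramList_eq_nil ts hparams, ← G.expansion_eq]
    rfl
  | term_left a r _ ih => rw [expand, expand, ih]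
  | term_right a l _ ih => rw [expand, expand, ih]
  | nt_child => rfl

lemma expand_eq_of_reflTransGen (h0 : ∀ A, G.rank A = 0) {u v : PTree L N}
    (h : Relation.ReflTransGen G.Rw u v) : u.expand G.expansion = v.expand G.expansion := by
  induction h with
  | refl => rfl
  | tail _ hrw ih => exact ih.trans (expand_eq_of_rw h0 hrw)

lemma eq_expand_of_derives (h0 : ∀ A, G.rank A = 0) {t : PTree L N} (ht : Ground t)
    (hder : Relation.ReflTransGen G.Rw (G.P G.start) t) :
    t = (G.P G.start).expand G.expansion := by
  rw [expand_eq_of_reflTransGen h0 hder, ht.expand_eq]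

lemma exists_mem_subtrees_expand_eq_subtreeAt {A : N} {u : PTree L N}
    (hu : u ∈ (G.P A).subtrees) {p : List Bool} (hp : (u.expand G.expansion).ValidPos p) :
    ∃ B, ∃ x ∈ (G.P B).subtrees,
      x.expand G.expansion = (u.expand G.expansion).subtreeAt p := by
  induction A using G.wellFounded_below.induction generalizing u p with
  | _ A ihA =>
  induction p generalizing u with
  | nil => exact ⟨A, u, hu, by rw [subtreeAt]⟩
  | cons b p ihp =>
    cases u with
    | term a l r =>
      cases b
      · exact ihp (left_mem_subtrees hu) (by simpa [expand, ValidPos] using hp)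
      · exact ihp (right_mem_subtrees hu) (by simpa [expand, ValidPos] using hp)
    | nt B ts =>
      rw [expand, G.expansion_eq] at hp ⊢
      exact ihA B (below_of_occurs (occurs_of_nt_mem_subtrees hu)) (mem_subtrees_self _) hp
    | leaf | param => simp [expand, ValidPos] at hp

lemma exists_resolve (B : N) : ∃ A, Relation.ReflTransGen (fun X Y => Occurs Y (G.P X)) B A ∧
    (∀ C ts, G.P A ≠ .nt C ts) ∧ G.expansion A = G.expansion B := by
  induction B using G.wellFounded_below.induction with
  | _ B ih =>
  by_cases h : ∃ C ts, G.P B = .nt C ts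
  · obtain ⟨C, ts, hB⟩ := h
    have hC : Occurs C (G.P B) := hB ▸ .here ts
    obtain ⟨A, hCA, hA, hexp⟩ := ih C (below_of_occurs hC)
    refine ⟨A, .head hC hCA, hA, ?_⟩
    rw [hexp, G.expansion_eq B, hB, expand]
  · push Not at h
    exact ⟨B, .refl, h, rfl⟩

variable (G)

noncomputable def resolve (B : N) : N := (G.exists_resolve B).choose

lemma resolve_spec (B : N) :
    Relation.ReflTransGen (fun X Y => Occurs Y (G.P X)) B (G.resolve B) ∧
      (∀ C ts, G.P (G.resolve B) ≠ .nt C ts) ∧ G.expansion (G.resolve B) = G.expansion B :=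
  (G.exists_resolve B).choose_spec

/-- A nonterminal leaf `B` is sent to the root of `G.P (G.resolve B)`: right-hand sides consisting
of a single nonterminal have no edges, so they cannot pay for a production of their own. -/
noncomputable def ref (A : N) : PTree L N → G.Node
  | .nt B _ => G.node (G.resolve B) (G.P (G.resolve B))
  | x => G.node A x

noncomputable def rhs (A : N) : PTree L N → List ((L × Bool) ⊕ Option G.Node)
  | .term a l r =>
    [.inl (a, false), .inr (some (G.ref A l)), .inr (some (G.ref A r)), .inl (a, true)]
  | _ => []

open Classical in
noncomputable def locate (p : List Bool) : G.Node :=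
  if h : ∃ B, ∃ x ∈ (G.P B).subtrees,
      x.expand G.expansion = ((G.P G.start).expand G.expansion).subtreeAt p
  then G.ref h.choose h.choose_spec.choose else G.node G.start (G.P G.start)

noncomputable def production (rs : List (List Bool)) :
    Option G.Node → List ((L × Bool) ⊕ Option G.Node)
  | none => rs.map fun p => .inr (some (G.locate p))
  | some v => G.rhs v.1 v.tree

noncomputable def height : Option G.Node → WithTop (Ordinal.{0} ×ₗ ℕ)
  | none => ⊤
  | some v => ↑(toLex (IsWellFounded.rank G.Below v.1, sizeOf v.tree))

lemma height_ref_lt {A : N} {x : PTree L N} (hx : x ∈ (G.P A).subtrees) {n : ℕ}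
    (hn : sizeOf x < n) :
    G.height (some (G.ref A x)) < ↑(toLex (IsWellFounded.rank G.Below A, n)) := by
  simp only [height, WithTop.coe_lt_coe, Prod.Lex.toLex_lt_toLex]
  cases x with
  | nt B ts =>
    left
    have hB : G.Below (G.resolve B) A :=
      .head' (occurs_of_nt_mem_subtrees hx) (G.resolve_spec B).1
    exact IsWellFounded.rank_lt_of_rel hB
  | _ => exact .inr ⟨rfl, by simpa [ref, G.tree_node hx] using hn⟩

lemma height_lt_of_mem_production (rs : List (List Bool)) (v w : Option G.Node)
    (h : Sum.inr w ∈ G.production rs v) : G.height w < G.height v := by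
  cases v with
  | none =>
    obtain ⟨p, -, ⟨⟩⟩ := List.mem_map.1 h
    exact WithTop.coe_lt_top _
  | some v =>
    obtain ⟨A, i⟩ := v
    have hx : Node.tree ⟨A, i⟩ ∈ (G.P A).subtrees := List.getElem_mem _
    change Sum.inr w ∈ G.rhs A (Node.tree ⟨A, i⟩) at h
    simp only [height]
    generalize Node.tree ⟨A, i⟩ = x at h hx ⊢
    cases x with
    | term a l r =>
      simp only [rhs, List.mem_cons, Sum.inr.injEq, reduceCtorEq, List.not_mem_nil,
        or_false, false_or] at h
      rcases h with rfl | rfl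
      · exact G.height_ref_lt (left_mem_subtrees hx) (by simp; omega)
      · exact G.height_ref_lt (right_mem_subtrees hx) (by simp)
    | _ => simp [rhs] at h

noncomputable def selectedSubtreesSLP (rs : List (List Bool)) :
    SLP (L × Bool) (Option G.Node) where
  start := none
  P := G.production rs
  acyclic := Relation.not_transGen_self_of_map_lt G.height (G.height_lt_of_mem_production rs)

open SLP

variable {G}

lemma ref_of_forall_ne_nt {A : N} {x : PTree L N} (hx : ∀ C ts, x ≠ .nt C ts) :
    G.ref A x = G.node A x := by
  cases x with
  | nt C ts => exact absurd rfl (hx C ts)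
  | _ => rfl

lemma derives_node (rs : List (List Bool)) {A : N} {x : PTree L N}
    (hx : x ∈ (G.P A).subtrees) {s : List (L × Bool)}
    (h : (G.selectedSubtreesSLP rs).Derives (G.rhs A x) s) :
    (G.selectedSubtreesSLP rs).Derives [.inr (some (G.node A x))] s := by
  apply Derives.nonterminal
  change Derives _ (G.rhs A (G.node A x).tree) s
  rwa [G.tree_node hx]

lemma derives_ref (rs : List (List Bool)) {A : N} {x : PTree L N}
    (hx : x ∈ (G.P A).subtrees) :
    (G.selectedSubtreesSLP rs).Derives [.inr (some (G.ref A x))]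
      (x.expand G.expansion).serialize := by
  induction A using G.wellFounded_below.induction generalizing x with
  | _ A ihA =>
  induction x using PTree.induction with
  | leaf | param => exact derives_node rs hx (derives_map_inl [])
  | term a l r ihl ihr =>
    apply derives_node rs hx
    have := (((derives_map_inl [(a, false)]).append (ihl (left_mem_subtrees hx))).append
      (ihr (right_mem_subtrees hx))).append (derives_map_inl [(a, true)])
    simpa [rhs, expand, serialize] using this
  | nt B ts =>
    obtain ⟨hB, hroot, hexp⟩ := G.resolve_spec B
    have := ihA (G.resolve B) (.head' (occurs_of_nt_mem_subtrees hx) hB) (mem_subtrees_self _)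
    rwa [ref_of_forall_ne_nt hroot, ← expansion_eq, hexp] at this

lemma generates_selectedSubtreesSLP (h0 : ∀ A, G.rank A = 0) (rs : List (List Bool))
    {t : PTree L N} (ht : Ground t) (hder : Relation.ReflTransGen G.Rw (G.P G.start) t)
    (hrs : ∀ p ∈ rs, t.ValidPos p) :
    (G.selectedSubtreesSLP rs).Generates (rs.map fun p => (t.subtreeAt p).serialize).flatten := by
  obtain rfl := eq_expand_of_derives h0 ht hder
  refine Derives.nonterminal (Derives.map_flatten fun p hp => ?_)
  have hex := exists_mem_subtrees_expand_eq_subtreeAt (mem_subtrees_self (G.P G.start)) (hrs p hp)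
  obtain ⟨hx, hexp⟩ := hex.choose_spec.choose_spec
  have := derives_ref rs hx
  rw [hexp] at this
  change Derives _ [.inr (some (G.locate p))] _
  rwa [locate, dif_pos hex]

end

lemma size_selectedSubtreesSLP [Fintype N] (rs : List (List Bool)) :
    (G.selectedSubtreesSLP rs).size ≤ rs.length + 2 * G.size := by
  have hrhs (A : N) : ((G.P A).subtrees.map fun x => (G.rhs A x).length).sum ≤
      2 * ((G.P A).nodeCount - 1) :=
    sum_map_subtrees_le _ (fun _ _ _ => le_rfl) (fun x hx => by
      cases x with
      | term a l r => exact absurd rfl (hx a l r)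
      | _ => rfl) _
  calc (G.selectedSubtreesSLP rs).size
      = rs.length + ∑ A, ((G.P A).subtrees.map fun x => (G.rhs A x).length).sum := by
        simp only [SLP.size, selectedSubtreesSLP, production, Fintype.sum_option,
          Fintype.sum_sigma, List.length_map, Node.tree]
        congr 1
        exact Finset.sum_congr rfl fun A _ =>
          Fin.sum_univ_fun_getElem (G.P A).subtrees fun x => (G.rhs A x).length
    _ ≤ rs.length + 2 * G.size := by
        rw [SLT.size, Finset.mul_sum]
        gcongr with A
        exact hrhs A

end SLT

/-- There is a constant `c > 0` such that for every 0-SLT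
grammar `G` (an SLT grammar all of whose nonterminals have rank 0, i.e. a
DAG) and every subset `R` of the nodes of the tree derived by `G` (given as
the list `rs` of its positions in pre-order), there is a straight-line
program of size `O(|G| + |R|)` that generates the concatenation, in pre-order
of the nodes of `R`, of the serializations of the subtrees rooted at the
nodes in `R`. -/
theorem slp_for_selected_subtrees_dag :
    ∃ c : ℕ, 0 < c ∧
      ∀ (L N : Type) [Fintype N] (G : SLT L N), (∀ A, G.rank A = 0) →
        ∀ rs : List (List Bool),
          ∃ (m : ℕ) (H : SLP (L × Bool) (Fin m)),
            SLP.size H ≤ c * (SLT.size G + rs.length + 1) ∧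
            ∀ t : PTree L N, PTree.Ground t →
              Relation.ReflTransGen (SLT.Rw G) (G.P G.start) t →
              (∀ p ∈ rs, PTree.ValidPos t p) → rs.Pairwise preLt →
              H.Generates (rs.map (fun p => (t.subtreeAt p).serialize)).flatten := by
  refine ⟨2, two_pos, fun L N _ G h0 rs => ?_⟩
  let e := Fintype.equivFin (Option G.Node)
  refine ⟨_, (G.selectedSubtreesSLP rs).relabel e, ?_, fun t ht hder hrs _ => ?_⟩
  · rw [SLP.size_relabel]
    have := G.size_selectedSubtreesSLP rs
    omega
  · exact (SLT.generates_selectedSubtreesSLP h0 rs ht hder hrs).relabel e
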